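/- Let L : ℝ⁴ → ℝ be C¹ and invariant under the diagonal action of a one-parameter group generated by a vector field ξ_Y on ℝ: L(F_t(y₁),…,F_t(y₄)) = L(y₁,…,y₄) where F_t is the flow of ξ_Y. If φ : cl U → ℝ solves the discrete Euler–Lagrange equations at all interior points of a finite regular set U ⊆ ℤ², then Σ over (i,j) ∈ ∂U and over rectangles □ ⊆ U with (i,j) = □^l of (∂L/∂y_l)(φ(□^1),…,φ(□^4)) · ξ_Y(φ(□^l)) equals 0 (the discrete Noether theorem). -/

import Mathlib

open scoped BigOperators

/-- The four vertices of the grid rectangle with base point `b`. -/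
def vert (b : ℤ × ℤ) : Fin 4 → ℤ × ℤ :=
  ![b, (b.1 + 1, b.2), (b.1 + 1, b.2 + 1), (b.1, b.2 + 1)]

/-- Base point of the rectangle having `p` as its `l`-th vertex. -/
def rbase (p : ℤ × ℤ) : Fin 4 → ℤ × ℤ :=
  ![p, (p.1 - 1, p.2), (p.1 - 1, p.2 - 1), (p.1, p.2 - 1)]

/-- The values of a field `φ` at the four vertices of the rectangle at `b`. -/
def args (φ : ℤ × ℤ → ℝ) (b : ℤ × ℤ) : Fin 4 → ℝ := fun k => φ (vert b k)

/-- Standard basis vector of `ℝ⁴`. -/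
noncomputable def E4 (l : Fin 4) : Fin 4 → ℝ := Pi.single l 1

/-- The rectangle at `b` is contained in `U`. -/
def rectIn (U : Set (ℤ × ℤ)) (b : ℤ × ℤ) : Prop := ∀ k, vert b k ∈ U

/-- Interior points of `U`: all four rectangles touching the point lie in `U`. -/
def intr (U : Set (ℤ × ℤ)) : Set (ℤ × ℤ) := {p | ∀ l : Fin 4, rectIn U (rbase p l)}

/-- Closure of `U`: union of all cells touching interior points of `U`. -/
def clos (U : Set (ℤ × ℤ)) : Set (ℤ × ℤ) :=
  {q | ∃ p ∈ intr U, ∃ l k, vert (rbase p l) k = q}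

/-- Boundary points of `U`. -/
def bdry (U : Set (ℤ × ℤ)) : Set (ℤ × ℤ) := (U ∩ clos U) \ intr U

/-!
Invariance of `L` under the flow, differentiated at `t = 0`, says that the four discrete momenta
`∂_l L · ξ_Y` of every rectangle sum to zero. Summing this over all rectangles in `U` and
regrouping the terms by the vertex they sit at, the total momentum over the points of `U`
vanishes. At interior points it vanishes pointwise by the Euler–Lagrange equations, and by
regularity the remaining points of `U` are exactly the boundary points.
-/

theorem fderiv_apply_eq_zero_of_flow_invariant {ι : Type*} [Fintype ι]
    {L : (ι → ℝ) → ℝ} {a : ι → ℝ} (hL : DifferentiableAt ℝ L a)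
    {F : ℝ → ℝ → ℝ} {ξ : ℝ → ℝ} (hF0 : ∀ y, F 0 y = y)
    (hξ : ∀ y, HasDerivAt (fun t => F t y) (ξ y) 0)
    (hinv : ∀ t, L (fun k => F t (a k)) = L a) :
    fderiv ℝ L a (fun k => ξ (a k)) = 0 := by
  have hflow : HasDerivAt (fun t k => F t (a k)) (fun k => ξ (a k)) 0 :=
    hasDerivAt_pi.2 fun k => hξ (a k)
  have hL' : HasFDerivAt L (fderiv ℝ L a) (fun k => F 0 (a k)) := by
    simpa only [hF0] using hL.hasFDerivAt
  have hcomp := hL'.comp_hasDerivAt 0 hflow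
  simp only [Function.comp_def, hinv] at hcomp
  exact hcomp.unique (hasDerivAt_const 0 (L a))

theorem sum_fderiv_single_mul_eq_zero_of_flow_invariant {ι : Type*} [Fintype ι] [DecidableEq ι]
    {L : (ι → ℝ) → ℝ} {a : ι → ℝ} (hL : DifferentiableAt ℝ L a)
    {F : ℝ → ℝ → ℝ} {ξ : ℝ → ℝ} (hF0 : ∀ y, F 0 y = y)
    (hξ : ∀ y, HasDerivAt (fun t => F t y) (ξ y) 0)
    (hinv : ∀ t, L (fun k => F t (a k)) = L a) :
    ∑ l, fderiv ℝ L a (Pi.single l 1) * ξ (a l) = 0 := by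
  conv_rhs => rw [← fderiv_apply_eq_zero_of_flow_invariant hL hF0 hξ hinv,
    pi_eq_sum_univ' fun k => ξ (a k), map_sum]
  simp only [map_smul, smul_eq_mul, mul_comm]

@[simp]
theorem vert_rbase (p : ℤ × ℤ) (l : Fin 4) : vert (rbase p l) l = p := by
  fin_cases l <;> simp [vert, rbase]

@[simp]
theorem rbase_vert (b : ℤ × ℤ) (l : Fin 4) : rbase (vert b l) l = b := by
  fin_cases l <;> simp [vert, rbase]

theorem mem_of_rectIn {U : Set (ℤ × ℤ)} {b : ℤ × ℤ} (h : rectIn U b) : b ∈ U := h 0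

theorem intr_subset (U : Set (ℤ × ℤ)) : intr U ⊆ U := fun p hp => by
  simpa using hp 0 0

theorem bdry_eq_sdiff_intr {U : Set (ℤ × ℤ)} (hreg : U = intr U ∪ bdry U) :
    bdry U = U \ intr U := by
  refine subset_antisymm (fun p hp => ⟨hp.1.1, hp.2⟩) fun p ⟨hpU, hpi⟩ => ?_
  rw [hreg] at hpU
  exact hpU.resolve_left hpi

theorem finsum_mem_rectIn_rbase_eq_finsum_mem_rectIn {M : Type*} [AddCommMonoid M]
    {U : Set (ℤ × ℤ)} (hU : U.Finite) (f : ℤ × ℤ → Fin 4 → M) :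
    ∑ᶠ p ∈ U, ∑ᶠ l ∈ {l | rectIn U (rbase p l)}, f (rbase p l) l =
      ∑ᶠ b ∈ {b | rectIn U b}, ∑ l, f b l := by
  classical
  have hR : {b | rectIn U b}.Finite := hU.subset fun _ => mem_of_rectIn
  simp only [finsum_mem_eq_toFinset_sum, Set.toFinset_ofPred,
    finsum_mem_eq_finite_toFinset_sum _ hU, finsum_mem_eq_finite_toFinset_sum _ hR]
  rw [← Finset.sum_finset_product' ((hU.toFinset ×ˢ Finset.univ).filter
      fun x => rectIn U (rbase x.1 x.2)) _ _ (by simp),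
    ← Finset.sum_finset_product' (hR.toFinset ×ˢ Finset.univ) _ _ (by simp)]
  refine Finset.sum_nbij' (fun x => (rbase x.1 x.2, x.2)) (fun x => (vert x.1 x.2, x.2))
    ?_ ?_ (by simp) (by simp) (by simp)
  · simp
  · rintro ⟨b, l⟩ hb
    replace hb : rectIn U b := by simpa using hb
    simpa using ⟨hb l, hb⟩

theorem stmt15_general (U : Set (ℤ × ℤ)) (hUfin : U.Finite)
    (hreg : U = intr U ∪ bdry U)
    (L : (Fin 4 → ℝ) → ℝ) (hL : ContDiff ℝ 1 L)
    (F : ℝ → ℝ → ℝ)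
    (hF0 : ∀ y, F 0 y = y)
    (ξY : ℝ → ℝ)
    (hξ : ∀ y, HasDerivAt (fun t => F t y) (ξY y) 0)
    (hinv : ∀ t (a : Fin 4 → ℝ), L (fun k => F t (a k)) = L a)
    (φ : ℤ × ℤ → ℝ)
    (hφ : ∀ p ∈ intr U, ∑ l : Fin 4, fderiv ℝ L (args φ (rbase p l)) (E4 l) = 0) :
    ∑ᶠ p ∈ bdry U, ∑ᶠ l ∈ {l : Fin 4 | rectIn U (rbase p l)},
      fderiv ℝ L (args φ (rbase p l)) (E4 l) * ξY (φ p) = 0 := by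
  set J : ℤ × ℤ → ℝ := fun p => ∑ᶠ l ∈ {l : Fin 4 | rectIn U (rbase p l)},
    fderiv ℝ L (args φ (rbase p l)) (E4 l) * ξY (φ p)
  have hintr : ∑ᶠ p ∈ intr U, J p = 0 := finsum_mem_eq_zero_of_forall_eq_zero fun p hp => by
    have hall : {l : Fin 4 | rectIn U (rbase p l)} = Set.univ := Set.eq_univ_of_forall hp
    simp only [J]
    rw [hall, finsum_mem_univ, finsum_eq_sum_of_fintype, ← Finset.sum_mul, hφ p hp, zero_mul]
  have htotal : ∑ᶠ p ∈ U, J p = 0 := by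
    calc ∑ᶠ p ∈ U, J p
        = ∑ᶠ p ∈ U, ∑ᶠ l ∈ {l : Fin 4 | rectIn U (rbase p l)},
            fderiv ℝ L (args φ (rbase p l)) (E4 l) * ξY (args φ (rbase p l) l) := by
          simp only [J, args, vert_rbase]
      _ = ∑ᶠ b ∈ {b | rectIn U b}, ∑ l, fderiv ℝ L (args φ b) (E4 l) * ξY (args φ b l) :=
          finsum_mem_rectIn_rbase_eq_finsum_mem_rectIn hUfin fun b l =>
            fderiv ℝ L (args φ b) (E4 l) * ξY (args φ b l)
      _ = 0 := finsum_mem_eq_zero_of_forall_eq_zero fun b _ =>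
          sum_fderiv_single_mul_eq_zero_of_flow_invariant
            ((hL.differentiable one_ne_zero).differentiableAt) hF0 hξ fun t => hinv t _
  have hsplit := finsum_mem_add_sdiff (intr_subset U) hUfin (f := J)
  rwa [hintr, htotal, zero_add, ← bdry_eq_sdiff_intr hreg] at hsplit

/-- The discrete Noether theorem: if `L` is invariant under the diagonal action of the
flow `F` of the vector field `ξ_Y` on `ℝ`, and `φ` solves the discrete Euler–Lagrange
equations at all interior points of a finite regular `U`, then the boundary sum of
the discrete momenta vanishes. -/
theorem stmt15 (U : Set (ℤ × ℤ)) (hUfin : U.Finite)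
    (hreg : U = intr U ∪ bdry U)
    (L : (Fin 4 → ℝ) → ℝ) (hL : ContDiff ℝ 1 L)
    (F : ℝ → ℝ → ℝ)
    (hF0 : ∀ y, F 0 y = y)
    (hFgrp : ∀ s t y, F (s + t) y = F s (F t y))
    (ξY : ℝ → ℝ)
    (hξ : ∀ y, HasDerivAt (fun t => F t y) (ξY y) 0)
    (hinv : ∀ t (a : Fin 4 → ℝ), L (fun k => F t (a k)) = L a)
    (φ : ℤ × ℤ → ℝ)
    (hφ : ∀ p ∈ intr U, ∑ l : Fin 4, fderiv ℝ L (args φ (rbase p l)) (E4 l) = 0) :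
    ∑ᶠ p ∈ bdry U, ∑ᶠ l ∈ {l : Fin 4 | rectIn U (rbase p l)},
      fderiv ℝ L (args φ (rbase p l)) (E4 l) * ξY (φ p) = 0 :=
  stmt15_general U hUfin hreg L hL F hF0 ξY hξ hinv φ hφ
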